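/- Let a ≼ b in ℕⁿ (componentwise) and suppose F = supp(b−a) is a facet of K^b I, i.e. F ∈ K^b I and F is not properly contained in any face of K^b I. Then every face of K^a I is a subset of F. -/

import Mathlib

/-!
Adjoining a face `G` of `K^a I` to `F = supp(b - a)` gives a face of `K^b I`: off `F` the
degrees `a` and `b` agree, and on `F` the extra unit of `b` pays for the new vertex. Since `F` is
a facet, `F ∪ G = F`.
-/

noncomputable section

namespace SylvanN

variable {n : ℕ}

/-- A monomial ideal in `k[x₁,…,x_n]`, identified with its (upward closed) set of
exponent vectors. -/
def IsMonomialIdeal (I : Set (Fin n → ℕ)) : Prop :=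
  ∀ ⦃c d : Fin n → ℕ⦄, c ∈ I → (∀ i, c i ≤ d i) → d ∈ I

/-- The 0-1 indicator vector of a squarefree face. -/
def ind (τ : Finset (Fin n)) : Fin n → ℕ := fun i => if i ∈ τ then 1 else 0

/-- The Koszul simplicial complex of `I` in degree `b`:
faces `τ` with `b ≥ τ` and `x^(b-τ) ∈ I`. -/
def K (I : Set (Fin n → ℕ)) (b : Fin n → ℕ) : Set (Finset (Fin n)) :=
  {τ | (∀ i, ind τ i ≤ b i) ∧ (fun i => b i - ind τ i) ∈ I}

/-- `supp(b - a)` for `a ≼ b`: the set of coordinates where `a` and `b` differ. -/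
def suppDiff (a b : Fin n → ℕ) : Finset (Fin n) :=
  Finset.univ.filter fun i => a i < b i

@[simp]
lemma mem_suppDiff {a b : Fin n → ℕ} {i : Fin n} : i ∈ suppDiff a b ↔ a i < b i := by
  simp [suppDiff]

lemma ind_le_one (τ : Finset (Fin n)) (i : Fin n) : ind τ i ≤ 1 := by
  unfold ind; split <;> omega

lemma ind_union_suppDiff_le {a b : Fin n → ℕ} {G : Finset (Fin n)} (hab : ∀ i, a i ≤ b i)
    (hG : ∀ i, ind G i ≤ a i) (i : Fin n) : ind (suppDiff a b ∪ G) i ≤ b i := by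
  have := hab i
  have := hG i
  by_cases hi : i ∈ suppDiff a b
  · have := ind_le_one (suppDiff a b ∪ G) i
    rw [mem_suppDiff] at hi
    omega
  · simp only [ind, Finset.mem_union, hi, false_or] at this ⊢
    omega

lemma sub_ind_le_sub_ind_union_suppDiff {a b : Fin n → ℕ} (hab : ∀ i, a i ≤ b i)
    (G : Finset (Fin n)) (i : Fin n) : a i - ind G i ≤ b i - ind (suppDiff a b ∪ G) i := by
  have := hab i
  by_cases hi : i ∈ suppDiff a b
  · have := ind_le_one (suppDiff a b ∪ G) i
    rw [mem_suppDiff] at hi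
    omega
  · have hba : a i = b i := by rw [mem_suppDiff] at hi; omega
    simp only [ind, Finset.mem_union, hi, false_or, hba, le_refl]

lemma suppDiff_union_mem_K {I : Set (Fin n → ℕ)} (hI : IsMonomialIdeal I) {a b : Fin n → ℕ}
    (hab : ∀ i, a i ≤ b i) {G : Finset (Fin n)} (hG : G ∈ K I a) :
    suppDiff a b ∪ G ∈ K I b :=
  ⟨ind_union_suppDiff_le hab hG.1, hI hG.2 (sub_ind_le_sub_ind_union_suppDiff hab G)⟩

theorem statement19_general (I : Set (Fin n → ℕ)) (hI : IsMonomialIdeal I)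
    (a b : Fin n → ℕ) (hab : ∀ i, a i ≤ b i)
    (hfacet : ∀ σ ∈ K I b, suppDiff a b ⊆ σ → σ = suppDiff a b)
    (G : Finset (Fin n)) (hG : G ∈ K I a) :
    G ⊆ suppDiff a b :=
  Finset.union_eq_left.mp
    (hfacet _ (suppDiff_union_mem_K hI hab hG) Finset.subset_union_left)

/-- If `a ≼ b` and `F = supp(b-a)` is a facet of `K^b I`, then
every face of `K^a I` is contained in `F`. -/
theorem statement19 (I : Set (Fin n → ℕ)) (hI : IsMonomialIdeal I)
    (a b : Fin n → ℕ) (hab : ∀ i, a i ≤ b i)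
    (hF : suppDiff a b ∈ K I b)
    (hfacet : ∀ σ ∈ K I b, suppDiff a b ⊆ σ → σ = suppDiff a b)
    (G : Finset (Fin n)) (hG : G ∈ K I a) :
    G ⊆ suppDiff a b :=
  statement19_general I hI a b hab hfacet G hG

end SylvanN

end
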